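/- arXiv:1204.1796 — 3 statements merged into one kernel-verified Lean document; each statement's English description precedes it below -/
import Mathlib

section
/- Let G = N ⋊ G₀ be a Frobenius group with kernel N and complement G₀. If |G₀| is even, then N is abelian. -/
/-!
An element `g ∈ G₀` of order two acts on `N` by a fixed-point-free involutive automorphism.
Since `N` is finite, `x ↦ x / (g x g⁻¹)` is then a bijection of `N`, and conjugation by `g`
inverts each value `x / (g x g⁻¹)`, hence every element of `N`; an inversion that is a
homomorphism forces `N` to be abelian.
-/

namespace MulAut

variable {G : Type*} [Group G] {N : Subgroup G} [N.Normal]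

theorem fixedPointFree_conjNormal {g : G} (hfix : ∀ x ∈ N, g * x * g⁻¹ = x → x = 1) :
    MonoidHom.FixedPointFree (conjNormal g : MulAut N) := fun x hx =>
  Subtype.ext <| hfix x x.2 <| by rw [← conjNormal_apply, hx]

theorem involutive_conjNormal {g : G} (hg : g ^ 2 = 1) :
    Function.Involutive (conjNormal g : MulAut N) := fun x => by
  rw [← mul_apply, ← map_mul, ← sq, hg, map_one, one_apply]

end MulAut

theorem Subgroup.Normal.commute_of_conj_involution_fixedPointFree {G : Type*} [Group G]
    {N : Subgroup G} [N.Normal] [Finite N] {g : G} (hg : g ^ 2 = 1)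
    (hfix : ∀ x ∈ N, g * x * g⁻¹ = x → x = 1) {a b : G} (ha : a ∈ N) (hb : b ∈ N) :
    Commute a b :=
  Subtype.ext_iff.mp <| (MulAut.fixedPointFree_conjNormal hfix).commute_all_of_involutive
    (MulAut.involutive_conjNormal hg) ⟨a, ha⟩ ⟨b, hb⟩

theorem frobenius_kernel_abelian_of_even_complement_general
    {G : Type*} [Group G] [Finite G] (N G₀ : Subgroup G)
    [N.Normal]
    (hfree : ∀ x ∈ N, x ≠ 1 → ∀ g ∈ G₀, g ≠ 1 → g * x * g⁻¹ ≠ x)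
    (heven : Even (Nat.card G₀)) :
    ∀ a ∈ N, ∀ b ∈ N, a * b = b * a := by
  obtain ⟨g, hg⟩ := exists_prime_orderOf_dvd_card' 2 heven.two_dvd
  have horder : orderOf (g : G) = 2 := by rw [Subgroup.orderOf_coe, hg]
  have hg1 : (g : G) ≠ 1 := by
    rintro h
    simp [h] at horder
  have hfix : ∀ x ∈ N, (g : G) * x * (g : G)⁻¹ = x → x = 1 := fun x hx hconj =>
    by_contra fun hx1 => hfree x hx hx1 g g.2 hg1 hconj
  intro a ha b hb
  exact Subgroup.Normal.commute_of_conj_involution_fixedPointFree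
    (horder ▸ pow_orderOf_eq_one (g : G)) hfix ha hb

/-- If `G = N ⋊ G₀` is a Frobenius group with kernel `N` and complement `G₀`,
and `|G₀|` is even, then `N` is abelian. -/
theorem frobenius_kernel_abelian_of_even_complement
    {G : Type*} [Group G] [Finite G] (N G₀ : Subgroup G)
    (hN : N ≠ ⊥) (hG₀ : G₀ ≠ ⊥) [N.Normal]
    (hinf : N ⊓ G₀ = ⊥) (hsup : N ⊔ G₀ = ⊤)
    (hfree : ∀ x ∈ N, x ≠ 1 → ∀ g ∈ G₀, g ≠ 1 → g * x * g⁻¹ ≠ x)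
    (heven : Even (Nat.card G₀)) :
    ∀ a ∈ N, ∀ b ∈ N, a * b = b * a :=
  frobenius_kernel_abelian_of_even_complement_general N G₀ hfree heven
end

section
/- A finite group G in which every abelian subgroup is cyclic has the property that every Sylow p-subgroup for an odd prime p is cyclic. -/
/-!
By induction on the order, it suffices to treat a non-cyclic `p`-group all of whose proper
subgroups are cyclic. It has two distinct subgroups `⟨x⟩` and `⟨y⟩` of index `p`, both normal,
and `x ^ p`, `y ^ p` lie in the cyclic `p`-group `⟨x⟩ ⊓ ⟨y⟩`, so one is a power of the other,
say `(x ^ p) ^ m = (y ^ p)⁻¹`. The commutator `c` of `x` and `y` lies in `⟨x⟩ ⊓ ⟨y⟩`, so it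
commutes with `x` and `y`, and `c ^ p = 1` because `y ^ p` commutes with `x`. Since `p` is odd,
`p ∣ p.choose 2`, so `(x ^ m * y) ^ p = (x ^ p) ^ m * y ^ p = 1`. If `c ≠ 1`, the abelian,
hence cyclic, group `⟨x ^ m * y, c⟩` has `⟨c⟩` as its only subgroup of order `p`, so
`x ^ m * y ∈ ⟨c⟩ ≤ ⟨x⟩` and `y ∈ ⟨x⟩`. Either way `x` and `y` commute, so `⟨x, y⟩` is cyclic
and one of `⟨x⟩`, `⟨y⟩` contains the other, which is absurd.
-/

open Subgroup

section

variable {G : Type*} [Group G]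

theorem IsCyclic.mem_zpowers_of_pow_orderOf_eq_one [Finite G] [IsCyclic G] {a b : G}
    (hb : b ^ orderOf a = 1) : b ∈ zpowers a := by
  classical
  have := Fintype.ofFinite G
  let S : Finset G := {x | x ^ orderOf a = 1}
  have hsub : (zpowers a : Set G).toFinset ⊆ S := fun x hx => by
    obtain ⟨j, rfl⟩ := mem_zpowers_iff.mp (Set.mem_toFinset.mp hx)
    simp [S, zpow_pow_orderOf]
  have heq : (zpowers a : Set G).toFinset = S :=
    Finset.eq_of_subset_of_card_le hsub <| by
      rw [← Nat.card_eq_card_toFinset]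
      exact (IsCyclic.card_pow_eq_one_le (orderOf_pos a)).trans_eq (Nat.card_zpowers a).symm
  rw [← SetLike.mem_coe, ← Set.mem_toFinset, heq]
  simpa [S] using hb

theorem Subgroup.mem_zpowers_of_pow_orderOf_eq_one {H : Subgroup G} [Finite H] [IsCyclic H]
    {a b : G} (ha : a ∈ H) (hb : b ∈ H) (h : b ^ orderOf a = 1) : b ∈ zpowers a := by
  have key := IsCyclic.mem_zpowers_of_pow_orderOf_eq_one (a := (⟨a, ha⟩ : H)) (b := ⟨b, hb⟩)
    (by rw [Subgroup.orderOf_mk]; exact Subtype.ext h)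
  obtain ⟨k, hk⟩ := mem_zpowers_iff.mp key
  exact mem_zpowers_iff.mpr ⟨k, congrArg Subtype.val hk⟩

theorem Subgroup.mem_zpowers_or_mem_zpowers_of_isPGroup {p : ℕ} [Fact p.Prime]
    {H : Subgroup G} [Finite H] [IsCyclic H] (hH : IsPGroup p H) {a b : G}
    (ha : a ∈ H) (hb : b ∈ H) : a ∈ zpowers b ∨ b ∈ zpowers a := by
  obtain ⟨i, hi⟩ := IsPGroup.iff_orderOf.mp hH ⟨a, ha⟩
  obtain ⟨j, hj⟩ := IsPGroup.iff_orderOf.mp hH ⟨b, hb⟩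
  rw [Subgroup.orderOf_mk] at hi hj
  rcases le_total i j with hij | hij
  · refine .inl (mem_zpowers_of_pow_orderOf_eq_one hb ha (orderOf_dvd_iff_pow_eq_one.mp ?_))
    rw [hi, hj]; exact pow_dvd_pow p hij
  · refine .inr (mem_zpowers_of_pow_orderOf_eq_one ha hb (orderOf_dvd_iff_pow_eq_one.mp ?_))
    rw [hi, hj]; exact pow_dvd_pow p hij

theorem mul_pow_eq_pow_mul_mul_pow {x y c : G} (h : y * x = x * y * c)
    (hcx : Commute c x) (n : ℕ) : y * x ^ n = x ^ n * y * c ^ n := by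
  induction n with
  | zero => simp
  | succ n ih =>
    calc y * x ^ (n + 1) = x ^ n * y * (c ^ n * x) := by
          rw [pow_succ, ← mul_assoc, ih, mul_assoc]
      _ = x ^ (n + 1) * y * c ^ (n + 1) := by
          rw [(hcx.pow_left n).eq, mul_assoc, ← mul_assoc y, h, pow_succ, pow_succ']
          simp only [mul_assoc]

theorem pow_mul_eq_mul_pow_mul_pow {x y c : G} (h : y * x = x * y * c)
    (hcy : Commute c y) (n : ℕ) : y ^ n * x = x * y ^ n * c ^ n := by
  induction n with
  | zero => simp
  | succ n ih =>
    calc y ^ (n + 1) * x = y * x * y ^ n * c ^ n := by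
          rw [pow_succ', mul_assoc, ih]; simp only [mul_assoc]
      _ = x * y * (c * y ^ n) * c ^ n := by rw [h]; simp only [mul_assoc]
      _ = x * y ^ (n + 1) * c ^ (n + 1) := by
          rw [(hcy.pow_right n).eq, pow_succ', pow_succ']; simp only [mul_assoc]

theorem mul_pow_eq_pow_mul_pow_mul_pow_choose_two {x y c : G} (h : y * x = x * y * c)
    (hcx : Commute c x) (hcy : Commute c y) (n : ℕ) :
    (x * y) ^ n = x ^ n * y ^ n * c ^ n.choose 2 := by
  induction n with
  | zero => simp
  | succ n ih =>
    have hyn := pow_mul_eq_mul_pow_mul_pow h hcy n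
    have hC : Commute (c ^ n.choose 2) (x * y) := (hcx.mul_right hcy).pow_left _
    calc (x * y) ^ (n + 1) = x ^ n * (y ^ n * x) * y * c ^ n.choose 2 := by
          rw [pow_succ, ih, mul_assoc _ _ (x * y), hC.eq]; simp only [mul_assoc]
      _ = x ^ (n + 1) * y ^ n * (c ^ n * y) * c ^ n.choose 2 := by
          rw [hyn, pow_succ x]; simp only [mul_assoc]
      _ = x ^ (n + 1) * y ^ (n + 1) * c ^ (n + 1).choose 2 := by
          rw [(hcy.pow_left n).eq, Nat.choose_succ_succ, Nat.choose_one_right, pow_add c,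
            pow_succ y]
          simp only [mul_assoc]

theorem mul_pow_prime_eq_of_odd {x y c : G} (h : y * x = x * y * c) (hcx : Commute c x)
    (hcy : Commute c y) {p : ℕ} [hp : Fact p.Prime] (hodd : Odd p) (hc : c ^ p = 1) :
    (x * y) ^ p = x ^ p * y ^ p := by
  obtain ⟨m, hm⟩ := hp.out.dvd_choose_self two_ne_zero (hp.out.odd_iff.mp hodd)
  rw [mul_pow_eq_pow_mul_pow_mul_pow_choose_two h hcx hcy, hm, pow_mul, hc, one_pow, mul_one]

theorem Commute.isMulCommutative_closure_pair {a b : G} (h : Commute a b) :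
    IsMulCommutative (closure {a, b}) :=
  isMulCommutative_closure <| by
    simp only [Set.mem_insert_iff, Set.mem_singleton_iff]
    rintro x (rfl | rfl) y (rfl | rfl) <;> first | rfl | exact h.eq | exact h.eq.symm

def AbelianSubgroupsCyclic (G : Type*) [Group G] : Prop :=
  ∀ H : Subgroup G, IsMulCommutative H → IsCyclic H

theorem AbelianSubgroupsCyclic.subgroup (hG : AbelianSubgroupsCyclic G) (K : Subgroup G) :
    AbelianSubgroupsCyclic K := fun H _ =>
  have := hG (H.map K.subtype) inferInstance
  (H.equivMapOfInjective K.subtype K.subtype_injective).isCyclic.mpr this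

theorem commute_of_normal_zpowers_of_pow_mem_zpowers [Finite G] (hG : AbelianSubgroupsCyclic G)
    {p : ℕ} [Fact p.Prime] (hodd : Odd p) {x y : G} (hx : (zpowers x).Normal)
    (hy : (zpowers y).Normal) (hyx : y ^ p ∈ zpowers (x ^ p)) : Commute x y := by
  set c := (x * y)⁻¹ * (y * x) with hc
  have hrel : y * x = x * y * c := by rw [hc]; group
  have hcx_mem : c ∈ zpowers x := by
    have := hx.conj_mem _ (inv_mem (mem_zpowers x)) y⁻¹
    rw [hc, show (x * y)⁻¹ * (y * x) = y⁻¹ * x⁻¹ * y⁻¹⁻¹ * x by group]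
    exact mul_mem this (mem_zpowers x)
  have hcy_mem : c ∈ zpowers y := by
    have := hy.conj_mem _ (mem_zpowers y) x⁻¹
    rw [hc, show (x * y)⁻¹ * (y * x) = y⁻¹ * (x⁻¹ * y * x⁻¹⁻¹) by group]
    exact mul_mem (inv_mem (mem_zpowers y)) this
  have hcx : Commute c x := setLike_mul_comm hcx_mem (mem_zpowers x)
  have hcy : Commute c y := setLike_mul_comm hcy_mem (mem_zpowers y)
  by_cases hc1 : c = 1
  · rw [hc1, mul_one] at hrel
    exact hrel.symm
  have hypx : y ^ p ∈ zpowers x := zpowers_le.mpr (pow_mem (mem_zpowers x) p) hyx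
  have hcp : c ^ p = 1 := by
    have := pow_mul_eq_mul_pow_mul_pow hrel hcy p
    rwa [(setLike_mul_comm hypx (mem_zpowers x) : y ^ p * x = x * y ^ p), left_eq_mul] at this
  obtain ⟨m, hm⟩ : ∃ m : ℕ, (x ^ p) ^ m = (y ^ p)⁻¹ :=
    mem_powers_iff_mem_zpowers.mpr (inv_mem hyx)
  set w := x ^ m * y with hw
  have hwp : w ^ p = 1 := by
    rw [hw, mul_pow_prime_eq_of_odd (mul_pow_eq_pow_mul_mul_pow hrel hcx m)
      (hcx.pow_pow m m) (hcy.pow_left m) hodd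
      (by rw [← pow_mul, mul_comm, pow_mul, hcp, one_pow]),
      ← pow_mul, mul_comm, pow_mul, hm, inv_mul_cancel]
  have hwc : Commute w c := ((hcx.pow_right m).mul_right hcy).symm
  have := hG _ hwc.isMulCommutative_closure_pair
  have hwx : w ∈ zpowers x := zpowers_le.mpr hcx_mem <|
    mem_zpowers_of_pow_orderOf_eq_one (H := closure {w, c}) (subset_closure (by simp))
      (subset_closure (by simp)) (by rwa [orderOf_eq_prime hcp hc1])
  have hy_mem : y ∈ zpowers x := by
    rw [show y = (x ^ m)⁻¹ * w by rw [hw]; group]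
    exact mul_mem (inv_mem (pow_mem (mem_zpowers x) m)) hwx
  exact (setLike_mul_comm hy_mem (mem_zpowers x)).symm

namespace IsPGroup

variable {p : ℕ} [hp : Fact p.Prime] [Finite G]

theorem normal_of_index_eq_prime (hG : IsPGroup p G) {M : Subgroup G} (hM : M.index = p) :
    M.Normal := by
  obtain ⟨k, hk⟩ := iff_card.mp hG
  have hk0 : k ≠ 0 := by
    rintro rfl
    rw [pow_zero, ← M.card_mul_index, hM, mul_eq_one] at hk
    exact hp.out.ne_one hk.2
  exact normal_of_index_eq_minFac_card (by rw [hM, hk, hp.out.pow_minFac hk0])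

theorem exists_index_eq_prime_of_ne_top (hG : IsPGroup p G) {K : Subgroup G} (hK : K ≠ ⊤) :
    ∃ M : Subgroup G, K ≤ M ∧ M.index = p := by
  obtain ⟨n, hn⟩ := iff_card.mp hG
  obtain ⟨j, hj⟩ := iff_card.mp (hG.to_subgroup K)
  have hjn : j < n := by
    rw [← Nat.pow_lt_pow_iff_right hp.out.one_lt, ← hj, ← hn]
    exact K.card_le_card_group.lt_of_ne (mt K.card_eq_iff_eq_top.mp hK)
  obtain ⟨m, rfl⟩ := Nat.exists_eq_add_of_lt hjn
  obtain ⟨M, hMcard, hKM⟩ := Sylow.exists_subgroup_card_pow_prime_le p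
    (hn ▸ pow_dvd_pow p (Nat.le_succ _)) K hj (Nat.le_add_right j m)
  refine ⟨M, hKM, ?_⟩
  have := M.card_mul_index
  rw [hMcard, hn, pow_succ] at this
  exact Nat.eq_of_mul_eq_mul_left (pow_pos hp.out.pos _) this

theorem isCyclic_of_forall_ne_top (hodd : Odd p) (hG : IsPGroup p G)
    (hab : AbelianSubgroupsCyclic G) (hproper : ∀ H : Subgroup G, H ≠ ⊤ → IsCyclic H) :
    IsCyclic G := by
  by_contra hcyc
  have hzpowers (g : G) : zpowers g ≠ ⊤ := fun h =>
    hcyc (isCyclic_iff_exists_zpowers_eq_top.mpr ⟨g, h⟩)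
  have hne_top {M : Subgroup G} (hM : M.index = p) : M ≠ ⊤ := fun h => by
    rw [h, index_top] at hM; exact hp.out.ne_one hM.symm
  have hgen {M : Subgroup G} (hM : M.index = p) : ∃ x, zpowers x = M :=
    M.isCyclic_iff_exists_zpowers_eq_top.mp (hproper M (hne_top hM))
  obtain ⟨M, -, hM⟩ :=
    hG.exists_index_eq_prime_of_ne_top (zpowers_one_eq_bot (G := G) ▸ hzpowers 1)
  obtain ⟨y₀, hy₀⟩ : ∃ y₀, y₀ ∉ M := by simpa [eq_top_iff'] using hne_top hM
  obtain ⟨N, hy₀N, hN⟩ := hG.exists_index_eq_prime_of_ne_top (hzpowers y₀)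
  obtain ⟨x, rfl⟩ := hgen hM
  obtain ⟨y, rfl⟩ := hgen hN
  have hxN : x ∉ zpowers y := fun hx => by
    have hle : zpowers x ≤ zpowers y := zpowers_le.mpr hx
    have heq : zpowers x = zpowers y := hle.eq_of_not_lt fun hlt =>
      (index_strictAnti hlt).ne (by rw [hM, hN])
    exact hy₀ (heq ▸ hy₀N (mem_zpowers y₀))
  have hyM : y ∉ zpowers x := fun hy => hy₀ (zpowers_le.mpr hy (hy₀N (mem_zpowers y₀)))
  have hMn := hG.normal_of_index_eq_prime hM
  have hNn := hG.normal_of_index_eq_prime hN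
  have hxp : x ^ p ∈ zpowers x ⊓ zpowers y :=
    ⟨pow_mem (mem_zpowers x) p, hN ▸ pow_index_mem (zpowers y) x⟩
  have hyp : y ^ p ∈ zpowers x ⊓ zpowers y :=
    ⟨hM ▸ pow_index_mem (zpowers x) y, pow_mem (mem_zpowers y) p⟩
  have := hproper _ (hne_top hM)
  have := isCyclic_of_le (inf_le_left : zpowers x ⊓ zpowers y ≤ zpowers x)
  have hxy : Commute x y := by
    rcases mem_zpowers_or_mem_zpowers_of_isPGroup (hG.to_subgroup _) hxp hyp with h | h
    · exact (commute_of_normal_zpowers_of_pow_mem_zpowers hab hodd hNn hMn h).symm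
    · exact commute_of_normal_zpowers_of_pow_mem_zpowers hab hodd hMn hNn h
  have := hab _ hxy.isMulCommutative_closure_pair
  rcases mem_zpowers_or_mem_zpowers_of_isPGroup (H := closure {x, y}) (a := x) (b := y)
    (hG.to_subgroup _) (subset_closure (by simp)) (subset_closure (by simp)) with h | h
  · exact hxN h
  · exact hyM h

theorem isCyclic_of_abelianSubgroupsCyclic (hodd : Odd p) (hG : IsPGroup p G)
    (hab : AbelianSubgroupsCyclic G) : IsCyclic G := by
  induction hcard : Nat.card G using Nat.strong_induction_on generalizing G with
  | _ n ih =>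
    refine hG.isCyclic_of_forall_ne_top hodd hab fun K hK => ?_
    exact ih _ (hcard ▸ K.card_le_card_group.lt_of_ne (mt K.card_eq_iff_eq_top.mp hK))
      (hG.to_subgroup K) (hab.subgroup K) rfl

end IsPGroup

end

/-- If every abelian subgroup of a finite group `G` is cyclic, then every Sylow
`p`-subgroup of `G` for an odd prime `p` is cyclic. -/
theorem sylow_cyclic_of_abelian_subgroups_cyclic
    {G : Type*} [Group G] [Finite G]
    (h : ∀ H : Subgroup G, (∀ a ∈ H, ∀ b ∈ H, a * b = b * a) → IsCyclic H)
    (p : ℕ) (hp : p.Prime) (hodd : Odd p) (P : Sylow p G) :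
    IsCyclic (P : Subgroup G) := by
  have := Fact.mk hp
  have hG : AbelianSubgroupsCyclic G := fun H _ => h H fun _ ha _ hb => setLike_mul_comm ha hb
  exact P.isPGroup'.isCyclic_of_abelianSubgroupsCyclic hodd (hG.subgroup P)
end

section
/- Every finite group all of whose Sylow subgroups are cyclic (a Z-group) is metacyclic; more precisely, it admits a presentation G = ⟨σ, τ : σ^m = 1, τ^n = 1, τστ⁻¹ = σ^r⟩ with r^n ≡ 1 (mod m) and gcd(m, n(r−1)) = 1. -/
/-!
By Schur–Zassenhaus and the Hall property of the commutator subgroup of a Z-group, `G` splits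
as `G' ⋊ H` with `G' = ⟨σ⟩` and `H = ⟨τ⟩ ≅ G ⧸ G'` cyclic of coprime orders `m` and `n`.
Conjugation by `τ` is `σ ↦ σ ^ r`, and `τ ^ n = 1` forces `r ^ n ≡ 1 (mod m)`. Finally
`⁅τ, σ⁆ = σ ^ (r - 1)` generates a normal subgroup with abelian quotient, so it contains `G' = ⟨σ⟩`,
which means that `r - 1` is prime to `m`.
-/

open Subgroup
open scoped commutatorElement

section

variable {G : Type*} [Group G]

theorem exists_conj_eq_pow [Finite G] {σ : G} (hσ : (zpowers σ).Normal) (τ : G) :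
    ∃ r, 1 ≤ r ∧ τ * σ * τ⁻¹ = σ ^ r := by
  obtain ⟨k, hk⟩ := mem_powers_iff_mem_zpowers.mpr (hσ.conj_mem σ (mem_zpowers σ) τ)
  refine ⟨k + orderOf σ, Nat.le_add_left_of_le (orderOf_pos σ), ?_⟩
  rw [pow_add, pow_orderOf_eq_one, mul_one, ← hk]

theorem conj_pow_eq_pow_pow {σ τ : G} {r : ℕ} (h : τ * σ * τ⁻¹ = σ ^ r) (j : ℕ) :
    τ ^ j * σ * (τ ^ j)⁻¹ = σ ^ r ^ j := by
  induction j with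
  | zero => simp
  | succ j ih =>
    calc τ ^ (j + 1) * σ * (τ ^ (j + 1))⁻¹ = τ * (τ ^ j * σ * (τ ^ j)⁻¹) * τ⁻¹ := by group
      _ = σ ^ r ^ (j + 1) := by rw [ih, ← conj_pow, h, ← pow_mul, pow_succ']

theorem pow_orderOf_modEq_one_of_conj_eq_pow {σ τ : G} {r : ℕ} (h : τ * σ * τ⁻¹ = σ ^ r) :
    r ^ orderOf τ ≡ 1 [MOD orderOf σ] := by
  rw [← pow_eq_pow_iff_modEq, ← conj_pow_eq_pow_pow h, pow_orderOf_eq_one]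
  group

theorem Subgroup.Normal.zpowers_pow {x : G} (hx : (zpowers x).Normal) (k : ℕ) :
    (zpowers (x ^ k)).Normal := by
  refine ⟨fun y hy g ↦ ?_⟩
  obtain ⟨j, rfl⟩ := mem_zpowers_iff.mp hy
  obtain ⟨i, hi⟩ := mem_zpowers_iff.mp (hx.conj_mem x (mem_zpowers x) g)
  refine mem_zpowers_iff.mpr ⟨i * j, ?_⟩
  rw [← conj_zpow, ← zpow_natCast, ← zpow_mul, ← conj_zpow, ← hi]
  group

theorem commutator_le_of_commutatorElement_mem {a b : G} (hab : zpowers a ⊔ zpowers b = ⊤)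
    {W : Subgroup G} [W.Normal] (h : ⁅a, b⁆ ∈ W) : commutator G ≤ W := by
  set f := QuotientGroup.mk' W
  have hgen : ∀ g, f g ∈ closure {f a, f b} := fun g ↦ by
    rw [← Set.image_pair, ← MonoidHom.map_closure, ← Set.singleton_union, Subgroup.closure_union,
      ← zpowers_eq_closure, ← zpowers_eq_closure, hab]
    exact mem_map_of_mem f (mem_top g)
  have : IsMulCommutative (closure {f a, f b}) := isMulCommutative_closure <| by
    have hfab : f a * f b = f b * f a := by
      rw [← commutatorElement_eq_one_iff_mul_comm, ← map_commutatorElement]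
      exact (QuotientGroup.eq_one_iff _).mpr h
    rintro x (rfl | rfl) y (rfl | rfl) <;> simp [hfab]
  rw [commutator_def, commutator_le]
  intro g _ g' _
  rw [← QuotientGroup.eq_one_iff, ← QuotientGroup.mk'_apply, map_commutatorElement,
    commutatorElement_eq_one_iff_mul_comm]
  exact setLike_mul_comm (hgen g) (hgen g')

theorem coprime_sub_one_orderOf_of_conj_eq_pow {σ τ : G} {r : ℕ} (hr : 1 ≤ r)
    (h : τ * σ * τ⁻¹ = σ ^ r) (hσ : (zpowers σ).Normal) (hσG : zpowers σ ≤ commutator G)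
    (hστ : zpowers σ ⊔ zpowers τ = ⊤) : (r - 1).Coprime (orderOf σ) := by
  have hcomm : ⁅τ, σ⁆ = σ ^ (r - 1) := by
    rw [commutatorElement_def, h, ← pow_sub_one_mul (by omega) σ, mul_inv_cancel_right]
  have : (zpowers (σ ^ (r - 1))).Normal := hσ.zpowers_pow (r - 1)
  have hle := commutator_le_of_commutatorElement_mem (by rwa [sup_comm])
    (hcomm ▸ mem_zpowers _ : ⁅τ, σ⁆ ∈ zpowers (σ ^ (r - 1)))
  exact mem_zpowers_pow_iff.mp (hle (hσG (mem_zpowers σ)))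

end

/-- Burnside: a finite group all of whose Sylow subgroups are cyclic (a Z-group) is split
metacyclic: `G = ⟨σ, τ : σ^m = 1, τ^n = 1, τστ⁻¹ = σ^r⟩` with `r^n ≡ 1 (mod m)` and
`gcd (m, n(r-1)) = 1`. -/
theorem zGroup_is_split_metacyclic
    {G : Type*} [Group G] [Finite G]
    (hZ : ∀ (p : ℕ), p.Prime → ∀ P : Sylow p G, IsCyclic (P : Subgroup G)) :
    ∃ (m n r : ℕ) (σ τ : G), 0 < m ∧ 0 < n ∧ 1 ≤ r ∧
      orderOf σ = m ∧ orderOf τ = n ∧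
      τ * σ * τ⁻¹ = σ ^ r ∧
      r ^ n ≡ 1 [MOD m] ∧ Nat.gcd m (n * (r - 1)) = 1 ∧
      (Subgroup.zpowers σ).Normal ∧
      Subgroup.zpowers σ ⊓ Subgroup.zpowers τ = ⊥ ∧
      Subgroup.zpowers σ ⊔ Subgroup.zpowers τ = ⊤ := by
  have : IsZGroup G := ⟨hZ⟩
  have hHall := IsZGroup.coprime_commutator_index G
  obtain ⟨H, hH⟩ := exists_right_complement'_of_coprime hHall
  have e : Abelianization G ≃* H := hH.symm.QuotientMulEquiv
  have : IsCyclic H := isCyclic_of_surjective e e.surjective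
  obtain ⟨σ, hσ⟩ := (commutator G).isCyclic_iff_exists_zpowers_eq_top.mp
    (IsZGroup.isCyclic_commutator G)
  obtain ⟨τ, rfl⟩ := H.isCyclic_iff_exists_zpowers_eq_top.mp this
  rw [← hσ] at hH hHall
  have hσ_normal : (zpowers σ).Normal := hσ ▸ inferInstance
  obtain ⟨r, hr, hconj⟩ := exists_conj_eq_pow hσ_normal τ
  have hmn : (orderOf σ).Coprime (orderOf τ) := by
    rwa [hH.symm.index_eq_card, Nat.card_zpowers, Nat.card_zpowers] at hHall
  have hr_sub_one := coprime_sub_one_orderOf_of_conj_eq_pow hr hconj hσ_normal hσ.le hH.sup_eq_top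
  exact ⟨_, _, r, σ, τ, orderOf_pos σ, orderOf_pos τ, hr, rfl, rfl, hconj,
    pow_orderOf_modEq_one_of_conj_eq_pow hconj, hmn.mul_right hr_sub_one.symm, hσ_normal,
    hH.disjoint.eq_bot, hH.sup_eq_top⟩
end
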